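/- arXiv:1706.05285 — 2 statements merged into one kernel-verified Lean document; each statement's English description precedes it below -/
import Mathlib

section
/- Let g : ℝⁿ → ℝ be C² and let x₀ be such that the Hessian H(x₀) has n₊ ≥ 1 positive eigenvalues with corresponding eigenvector matrix V₊, and suppose V₊ᵀ∇g(x₀) ≠ 0. Then the direction v = −(H₊(x₀))†∇g(x₀) satisfies vᵀ∇g(x₀) < 0 and vᵀH(x₀)∇g(x₀) < 0, hence there exists α > 0 such that both g(x₀ + αv) < g(x₀) and G(x₀ + αv) < G(x₀), where G = ½‖∇g‖². -/
/-!
In the coordinates `cᵢ = ⟪bᵢ, ∇g x₀⟫` of the gradient in an eigenbasis of `H x₀`, with `S` the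
set of positive eigenvalues,
`⟪v, ∇g⟫ = -∑_{i ∈ S} λᵢ⁻¹ cᵢ²` and `⟪v, H ∇g⟫ = -∑_{i ∈ S} cᵢ²`, and some `cᵢ` with `i ∈ S`
is nonzero. Since `∇G = H ∇g`, these are the derivatives of `g` and `G` along `v` at `x₀`, so a
small step `α v` decreases both.
-/

open RealInnerProductSpace Filter Topology

theorem HasDerivAt.eventually_lt_of_neg {φ : ℝ → ℝ} {d x : ℝ} (hφ : HasDerivAt φ d x)
    (hd : d < 0) : ∀ᶠ t in 𝓝[>] x, φ t < φ x := by
  have hslope : ∀ᶠ t in 𝓝[>] x, slope φ x t < 0 :=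
    ((hasDerivAt_iff_tendsto_slope.1 hφ).mono_left (nhdsGT_le_nhdsNE x)).eventually_lt_const hd
  filter_upwards [hslope, self_mem_nhdsWithin] with t ht hxt
  exact (slope_neg_iff_of_le (le_of_lt hxt)).1 ht

theorem HasFDerivAt.eventually_lt_of_apply_neg {E : Type*} [NormedAddCommGroup E]
    [NormedSpace ℝ E] {f : E → ℝ} {f' : E →L[ℝ] ℝ} {x v : E} (hf : HasFDerivAt f f' x)
    (hv : f' v < 0) : ∀ᶠ t in 𝓝[>] (0 : ℝ), f (x + t • v) < f x := by
  simpa using (hf.hasLineDerivAt v).eventually_lt_of_neg hv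

theorem HasFDerivAt.half_norm_sq {E F : Type*} [NormedAddCommGroup E] [NormedSpace ℝ E]
    [NormedAddCommGroup F] [InnerProductSpace ℝ F] {f : E → F} {f' : E →L[ℝ] F} {x : E}
    (hf : HasFDerivAt f f' x) :
    HasFDerivAt (fun y => 1 / 2 * ‖f y‖ ^ 2) ((innerSL ℝ (f x)).comp f') x := by
  refine (hf.norm_sq.const_mul (1 / 2 : ℝ)).congr_fderiv ?_
  ext
  simp

namespace Matrix.IsHermitian

variable {n : Type*} [Fintype n] [DecidableEq n] {A : Matrix n n ℝ}

theorem inner_toEuclideanCLM_left (hA : A.IsHermitian) (x y : EuclideanSpace ℝ n) :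
    ⟪toEuclideanCLM (𝕜 := ℝ) A x, y⟫ = ⟪x, toEuclideanCLM (𝕜 := ℝ) A y⟫ :=
  isSymmetric_toEuclideanLin_iff.mpr hA x y

variable (hA : A.IsHermitian)

theorem toEuclideanCLM_eigenvectorBasis (i : n) :
    toEuclideanCLM (𝕜 := ℝ) A (hA.eigenvectorBasis i) =
      hA.eigenvalues i • hA.eigenvectorBasis i := by
  apply WithLp.ofLp_injective
  simpa using hA.mulVec_eigenvectorBasis i

theorem inner_eigenvectorBasis_toEuclideanCLM (i : n) (w : EuclideanSpace ℝ n) :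
    ⟪hA.eigenvectorBasis i, toEuclideanCLM (𝕜 := ℝ) A w⟫ =
      hA.eigenvalues i * ⟪hA.eigenvectorBasis i, w⟫ := by
  rw [← hA.inner_toEuclideanCLM_left, hA.toEuclideanCLM_eigenvectorBasis, real_inner_smul_left]

/-- The Moore–Penrose pseudo-inverse of the positive part of `A`, applied to `w`;
the paper's `(H₊)† w = V₊ Λ₊⁻¹ V₊ᵀ w`. -/
noncomputable def posPartPinv (w : EuclideanSpace ℝ n) : EuclideanSpace ℝ n :=
  ∑ i ∈ Finset.univ.filter (fun i => 0 < hA.eigenvalues i),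
    ((hA.eigenvalues i)⁻¹ * ⟪hA.eigenvectorBasis i, w⟫) • hA.eigenvectorBasis i

theorem inner_posPartPinv_self (w : EuclideanSpace ℝ n) :
    ⟪hA.posPartPinv w, w⟫ = ∑ i ∈ Finset.univ.filter (fun i => 0 < hA.eigenvalues i),
      (hA.eigenvalues i)⁻¹ * ⟪hA.eigenvectorBasis i, w⟫ ^ 2 := by
  rw [posPartPinv, sum_inner]
  refine Finset.sum_congr rfl fun i _ => ?_
  rw [real_inner_smul_left]
  ring

theorem inner_posPartPinv_toEuclideanCLM (w : EuclideanSpace ℝ n) :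
    ⟪hA.posPartPinv w, toEuclideanCLM (𝕜 := ℝ) A w⟫ =
      ∑ i ∈ Finset.univ.filter (fun i => 0 < hA.eigenvalues i),
        ⟪hA.eigenvectorBasis i, w⟫ ^ 2 := by
  rw [posPartPinv, sum_inner]
  refine Finset.sum_congr rfl fun i hi => ?_
  have hpos : hA.eigenvalues i ≠ 0 := (Finset.mem_filter.1 hi).2.ne'
  rw [real_inner_smul_left, hA.inner_eigenvectorBasis_toEuclideanCLM]
  field_simp

variable {hA} {w : EuclideanSpace ℝ n}

theorem inner_posPartPinv_self_pos
    (hw : ∃ i, 0 < hA.eigenvalues i ∧ ⟪hA.eigenvectorBasis i, w⟫ ≠ 0) : 0 < ⟪hA.posPartPinv w, w⟫ := by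
  obtain ⟨i, hpos, hi⟩ := hw
  rw [inner_posPartPinv_self]
  refine Finset.sum_pos' (fun j hj => ?_) ⟨i, Finset.mem_filter.2 ⟨Finset.mem_univ i, hpos⟩, ?_⟩
  · have := (Finset.mem_filter.1 hj).2
    positivity
  · exact mul_pos (inv_pos.2 hpos) (sq_pos_of_ne_zero hi)

theorem inner_posPartPinv_toEuclideanCLM_pos
    (hw : ∃ i, 0 < hA.eigenvalues i ∧ ⟪hA.eigenvectorBasis i, w⟫ ≠ 0) :
    0 < ⟪hA.posPartPinv w, toEuclideanCLM (𝕜 := ℝ) A w⟫ := by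
  obtain ⟨i, hpos, hi⟩ := hw
  rw [inner_posPartPinv_toEuclideanCLM]
  exact Finset.sum_pos' (fun j _ => sq_nonneg _)
    ⟨i, Finset.mem_filter.2 ⟨Finset.mem_univ i, hpos⟩, sq_pos_of_ne_zero hi⟩

end Matrix.IsHermitian

theorem stmt_11_general {n : ℕ} (g : EuclideanSpace ℝ (Fin n) → ℝ)
    (H : EuclideanSpace ℝ (Fin n) → Matrix (Fin n) (Fin n) ℝ)
    (hH : ∀ x, HasFDerivAt (gradient g) (Matrix.toEuclideanCLM (𝕜 := ℝ) (H x)) x)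
    (x₀ : EuclideanSpace ℝ (Fin n)) (hHerm : (H x₀).IsHermitian)
    (hw : ∃ i, 0 < hHerm.eigenvalues i ∧ ⟪hHerm.eigenvectorBasis i, gradient g x₀⟫ ≠ 0)
    (G : EuclideanSpace ℝ (Fin n) → ℝ)
    (hG : ∀ x, G x = (1 / 2) * ‖gradient g x‖ ^ 2)
    (v : EuclideanSpace ℝ (Fin n))
    (hv : v = -∑ i ∈ Finset.univ.filter (fun i => 0 < hHerm.eigenvalues i),
        ((hHerm.eigenvalues i)⁻¹ * ⟪hHerm.eigenvectorBasis i, gradient g x₀⟫) •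
          hHerm.eigenvectorBasis i) :
    ⟪v, gradient g x₀⟫ < 0 ∧
    ⟪v, Matrix.toEuclideanCLM (𝕜 := ℝ) (H x₀) (gradient g x₀)⟫ < 0 ∧
    ∃ α : ℝ, 0 < α ∧ g (x₀ + α • v) < g x₀ ∧ G (x₀ + α • v) < G x₀ := by
  replace hv : v = -hHerm.posPartPinv (gradient g x₀) := hv
  have hg_slope : ⟪v, gradient g x₀⟫ < 0 := by
    rw [hv, inner_neg_left, neg_lt_zero]
    exact Matrix.IsHermitian.inner_posPartPinv_self_pos hw
  have hG_slope : ⟪v, Matrix.toEuclideanCLM (𝕜 := ℝ) (H x₀) (gradient g x₀)⟫ < 0 := by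
    rw [hv, inner_neg_left, neg_lt_zero]
    exact Matrix.IsHermitian.inner_posPartPinv_toEuclideanCLM_pos hw
  -- `hw` forces `∇g x₀ ≠ 0`, which rules out the junk value of `gradient` at a non-differentiable point.
  have hg_diff : DifferentiableAt ℝ g x₀ := by
    by_contra h
    obtain ⟨i, -, hi⟩ := hw
    simp [gradient_eq_zero_of_not_differentiableAt h] at hi
  have hG_deriv := (hH x₀).half_norm_sq
  rw [← funext hG] at hG_deriv
  have hg_lt := hg_diff.hasGradientAt.hasFDerivAt.eventually_lt_of_apply_neg (v := v)
    (by simpa [real_inner_comm] using hg_slope)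
  have hG_lt := hG_deriv.eventually_lt_of_apply_neg (v := v)
    (by rwa [ContinuousLinearMap.comp_apply, innerSL_apply_apply, real_inner_comm,
      hHerm.inner_toEuclideanCLM_left])
  obtain ⟨α, ⟨hgα, hGα⟩, hα⟩ := ((hg_lt.and hG_lt).and self_mem_nhdsWithin).exists
  exact ⟨hg_slope, hG_slope, α, hα, hgα, hGα⟩

/-- Double-descent direction in an indefinite region: if the Hessian `H x₀` has at
least one positive eigenvalue and `V₊ᵀ ∇g x₀ ≠ 0`, then `v = -(H₊(x₀))† ∇g x₀`
satisfies `vᵀ ∇g x₀ < 0` and `vᵀ H(x₀) ∇g x₀ < 0`, hence there is `α > 0` with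
`g (x₀ + α v) < g x₀` and `G (x₀ + α v) < G x₀`, where `G = ½‖∇g‖²`. -/
theorem stmt_11 {n : ℕ} (g : EuclideanSpace ℝ (Fin n) → ℝ)
    (hg : ContDiff ℝ 2 g)
    (H : EuclideanSpace ℝ (Fin n) → Matrix (Fin n) (Fin n) ℝ)
    (hH : ∀ x, HasFDerivAt (gradient g) (Matrix.toEuclideanCLM (𝕜 := ℝ) (H x)) x)
    (x₀ : EuclideanSpace ℝ (Fin n)) (hHerm : (H x₀).IsHermitian)
    (hw : ∃ i, 0 < hHerm.eigenvalues i ∧ ⟪hHerm.eigenvectorBasis i, gradient g x₀⟫ ≠ 0)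
    (G : EuclideanSpace ℝ (Fin n) → ℝ)
    (hG : ∀ x, G x = (1 / 2) * ‖gradient g x‖ ^ 2)
    (v : EuclideanSpace ℝ (Fin n))
    (hv : v = -∑ i ∈ Finset.univ.filter (fun i => 0 < hHerm.eigenvalues i),
        ((hHerm.eigenvalues i)⁻¹ * ⟪hHerm.eigenvectorBasis i, gradient g x₀⟫) •
          hHerm.eigenvectorBasis i) :
    ⟪v, gradient g x₀⟫ < 0 ∧
    ⟪v, Matrix.toEuclideanCLM (𝕜 := ℝ) (H x₀) (gradient g x₀)⟫ < 0 ∧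
    ∃ α : ℝ, 0 < α ∧ g (x₀ + α • v) < g x₀ ∧ G (x₀ + α • v) < G x₀ :=
  stmt_11_general g H hH x₀ hHerm hw G hG v hv
end

section
/- The function g₁(x,y) = (x²y − x − 1)² + (x² − 1)² on ℝ² has exactly two critical points, namely (1,2) and (−1,0), both of which are local minima; in particular g₁ has two strict local minima and no other critical point (no mountain pass between them). -/
/-!
Write `g₁ = u² + v²` with `u = x²y − x − 1` and `v = x² − 1`. The common zeros of `u` and `v`
are exactly `(1, 2)` and `(−1, 0)`, so these are strict global minima with value `0`.
The critical points are also exactly these: `∂g₁/∂y = 2ux²`, and `x = 0` is not critical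
because there `∂g₁/∂x = 2`, so a critical point has `u = 0`, and then `∂g₁/∂x = 4xv` forces
`v = 0`.
-/

open ContinuousLinearMap Filter Topology

theorem HasFDerivAt.sq_add_sq {E : Type*} [NormedAddCommGroup E] [NormedSpace ℝ E]
    {f g : E → ℝ} {f' g' : E →L[ℝ] ℝ} {x : E} (hf : HasFDerivAt f f' x) (hg : HasFDerivAt g g' x) :
    HasFDerivAt (fun y => f y ^ 2 + g y ^ 2) ((2 * f x) • f' + (2 * g x) • g') x :=
  ((hf.pow 2).add (hg.pow 2)).congr_fderiv (by simp [mul_comm])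

theorem smul_fst_add_smul_snd_eq_zero_iff {R : Type*} [CommSemiring R] [TopologicalSpace R]
    [IsTopologicalSemiring R] (a b : R) :
    a • fst R R R + b • snd R R R = 0 ↔ a = 0 ∧ b = 0 := by
  refine ⟨fun h => ⟨?_, ?_⟩, fun ⟨ha, hb⟩ => by ext <;> simp [ha, hb]⟩
  · simpa using congr($h (1, 0))
  · simpa using congr($h (0, 1))

theorem eventually_nhdsNE_lt_of_forall_ne {X α : Type*} [TopologicalSpace X] [T1Space X] [LT α]
    {f : X → α} {a b : X} (hab : a ≠ b) (h : ∀ x, x ≠ a → x ≠ b → f a < f x) :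
    ∀ᶠ x in 𝓝[≠] a, f a < f x := by
  filter_upwards [eventually_ne_nhdsWithin hab, self_mem_nhdsWithin] with x hxb hxa
  exact h x hxa hxb

namespace G1

def u (p : ℝ × ℝ) : ℝ := p.1 ^ 2 * p.2 - p.1 - 1

def v (p : ℝ × ℝ) : ℝ := p.1 ^ 2 - 1

theorem u_eq_zero_and_v_eq_zero_iff {p : ℝ × ℝ} :
    u p = 0 ∧ v p = 0 ↔ p = (1, 2) ∨ p = (-1, 0) := by
  obtain ⟨x, y⟩ := p
  simp only [u, v, Prod.mk.injEq]
  constructor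
  · rintro ⟨hu, hv⟩
    obtain rfl | rfl := sq_eq_one_iff.mp (sub_eq_zero.mp hv)
    · exact Or.inl ⟨rfl, by linarith⟩
    · exact Or.inr ⟨rfl, by linarith⟩
  · rintro (⟨rfl, rfl⟩ | ⟨rfl, rfl⟩) <;> norm_num

theorem hasFDerivAt_u (p : ℝ × ℝ) :
    HasFDerivAt u ((2 * p.1 * p.2 - 1) • fst ℝ ℝ ℝ + p.1 ^ 2 • snd ℝ ℝ ℝ) p := by
  have hx : HasFDerivAt (fun q : ℝ × ℝ => q.1) (fst ℝ ℝ ℝ) p := hasFDerivAt_fst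
  have hy : HasFDerivAt (fun q : ℝ × ℝ => q.2) (snd ℝ ℝ ℝ) p := hasFDerivAt_snd
  refine ((((hx.pow 2).mul hy).sub hx).sub_const 1).congr_fderiv ?_
  ext <;> simp [mul_comm]

theorem hasFDerivAt_v (p : ℝ × ℝ) : HasFDerivAt v ((2 * p.1) • fst ℝ ℝ ℝ) p := by
  have hx : HasFDerivAt (fun q : ℝ × ℝ => q.1) (fst ℝ ℝ ℝ) p := hasFDerivAt_fst
  exact ((hx.pow 2).sub_const 1).congr_fderiv (by ext <;> simp)

theorem hasFDerivAt_sq_add_sq (p : ℝ × ℝ) :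
    HasFDerivAt (fun q => u q ^ 2 + v q ^ 2)
      ((2 * u p * (2 * p.1 * p.2 - 1) + 2 * v p * (2 * p.1)) • fst ℝ ℝ ℝ
        + (2 * u p * p.1 ^ 2) • snd ℝ ℝ ℝ) p :=
  ((hasFDerivAt_u p).sq_add_sq (hasFDerivAt_v p)).congr_fderiv (by ext <;> simp)

theorem critical_iff {p : ℝ × ℝ} :
    2 * u p * (2 * p.1 * p.2 - 1) + 2 * v p * (2 * p.1) = 0 ∧ 2 * u p * p.1 ^ 2 = 0 ↔
      u p = 0 ∧ v p = 0 := by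
  refine ⟨fun ⟨hx, hy⟩ => ?_, fun ⟨hu, hv⟩ => by simp [hu, hv]⟩
  have hx0 : p.1 ≠ 0 := by
    intro h
    simp [u, v, h] at hx
  have hu : u p = 0 := by simpa [hx0] using hy
  refine ⟨hu, ?_⟩
  simpa [hu, hx0] using hx

end G1

/-- The function `g₁ (x, y) = (x²y − x − 1)² + (x² − 1)²` has exactly two critical
points, `(1, 2)` and `(−1, 0)`, both strict local minima, and no other critical
point. -/
theorem stmt_15 (g₁ : ℝ × ℝ → ℝ)
    (hg : ∀ p : ℝ × ℝ, g₁ p = (p.1 ^ 2 * p.2 - p.1 - 1) ^ 2 + (p.1 ^ 2 - 1) ^ 2) :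
    (∀ p : ℝ × ℝ, fderiv ℝ g₁ p = 0 ↔ p = (1, 2) ∨ p = (-1, 0)) ∧
    (∀ᶠ q in nhdsWithin (1, 2) {(1, 2)}ᶜ, g₁ (1, 2) < g₁ q) ∧
    (∀ᶠ q in nhdsWithin (-1, 0) {(-1, 0)}ᶜ, g₁ (-1, 0) < g₁ q) := by
  have hg₁ : g₁ = fun p => G1.u p ^ 2 + G1.v p ^ 2 := funext hg
  have hzero : ∀ p, g₁ p = 0 ↔ p = (1, 2) ∨ p = (-1, 0) := fun p => by
    rw [hg₁, add_eq_zero_iff_of_nonneg (sq_nonneg _) (sq_nonneg _), sq_eq_zero_iff,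
      sq_eq_zero_iff, G1.u_eq_zero_and_v_eq_zero_iff]
  have hpos : ∀ q, q ≠ (1, 2) → q ≠ (-1, 0) → 0 < g₁ q := fun q h₁ h₂ =>
    lt_of_le_of_ne (by rw [hg₁]; positivity) fun h => ((hzero q).1 h.symm).elim h₁ h₂
  refine ⟨fun p => ?_, ?_, ?_⟩
  · rw [hg₁, (G1.hasFDerivAt_sq_add_sq p).fderiv, smul_fst_add_smul_snd_eq_zero_iff,
      G1.critical_iff, G1.u_eq_zero_and_v_eq_zero_iff]
  · refine eventually_nhdsNE_lt_of_forall_ne (b := (-1, 0)) (by norm_num) fun q h₁ h₂ => ?_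
    rw [(hzero _).2 (.inl rfl)]
    exact hpos q h₁ h₂
  · refine eventually_nhdsNE_lt_of_forall_ne (b := (1, 2)) (by norm_num) fun q h₂ h₁ => ?_
    rw [(hzero _).2 (.inr rfl)]
    exact hpos q h₁ h₂
end
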